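/- arXiv:2102.13411 — 5 statements merged into one kernel-verified Lean document; each statement's English description precedes it below -/
import Mathlib

section
/- For every positive integer q, every l_θ > 0, every l_s > l_θ and every 0 < ε_s ≤ 1, there exist a constant l_γ > 0 and a class K function γ_s such that γ_s(s) ≤ l_γ and γ_s(s) ≤ s for all s ≥ 0, and such that |satv(θ + θ̃) − θ| ≤ γ_s(|θ̃|) for all θ̃ ∈ ℝ^q and all θ ∈ ℝ^q with |θ| ≤ l_θ (Euclidean norm). -/
open Real Set Filter
open scoped RealInnerProductSpace

noncomputable section

/-- A continuous function `ρ : [0,∞) → [0,∞)` is of class K if it is strictly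
increasing with `ρ 0 = 0`. -/
def IsClassK (ρ : ℝ → ℝ) : Prop :=
  ContinuousOn ρ (Set.Ici 0) ∧ StrictMonoOn ρ (Set.Ici 0) ∧ ρ 0 = 0

/-- Class K-infinity: class K and unbounded. -/
def IsClassKInfty (ρ : ℝ → ℝ) : Prop :=
  IsClassK ρ ∧ Filter.Tendsto ρ Filter.atTop Filter.atTop

/-- Class KL functions. -/
def IsClassKL (β : ℝ → ℝ → ℝ) : Prop :=
  (∀ t ∈ Set.Ici (0:ℝ), IsClassK fun s => β s t) ∧
  ∀ s ∈ Set.Ici (0:ℝ), AntitoneOn (β s) (Set.Ici 0) ∧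
      Filter.Tendsto (β s) Filter.atTop (nhds 0)

/-- The smooth saturation function with level `ls` and margin `εs`. -/
noncomputable def sat (ls εs s : ℝ) : ℝ :=
  if |s| ≤ ls then s
  else if |s| ≤ ls + εs then s - Real.sign s * (|s| - ls) ^ 2 / (2 * εs)
  else (ls + εs / 2) * Real.sign s

/-- Componentwise saturation on `ℝ^q`. -/
noncomputable def satv {q : ℕ} (ls εs : ℝ) (θ : EuclideanSpace ℝ (Fin q)) :
    EuclideanSpace ℝ (Fin q) := WithLp.toLp 2 (fun i => sat ls εs (θ i))

/-- The dead-zone function with level `lθ`. -/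
noncomputable def dz (lθ s : ℝ) : ℝ :=
  if |s| ≤ lθ then 0
  else if |s| < lθ + 1 then
    (|s| - lθ) ^ 2 * (2 * (lθ + 1) ^ 2 - (2 * lθ + 1) * |s|) * Real.sign s
  else s

/-- Componentwise dead-zone on `ℝ^q`. -/
noncomputable def dzv {q : ℕ} (lθ : ℝ) (θ : EuclideanSpace ℝ (Fin q)) :
    EuclideanSpace ℝ (Fin q) := WithLp.toLp 2 (fun i => dz lθ (θ i))


/-!
Componentwise, `sat` moves a point only towards the interval `[-ls, ls]` and never past its
boundary, so for `|θ i| ≤ ls` it is a contraction towards `θ i`: the error is at most `‖θ̃‖`.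
Since `sat` is bounded by `ls + εs / 2`, the error is also at most
`C = √q (ls + εs / 2) + lθ` by the triangle inequality. The gain `s ↦ min s (C + arctan s)` lies between `min s C`
and `s`, is bounded by `C + π / 2`, and is of class K.
-/

section Saturation

variable {ls εs : ℝ}

lemma sat_neg (ls εs s : ℝ) : sat ls εs (-s) = -sat ls εs s := by
  unfold sat
  rw [abs_neg, Real.sign_neg]
  split_ifs <;> ring

lemma sat_of_abs_le (εs : ℝ) {s : ℝ} (h : |s| ≤ ls) : sat ls εs s = s := if_pos h

lemma sat_mem_Icc_of_le (hls : 0 ≤ ls) (hεs : 0 < εs) {s : ℝ} (h : ls ≤ s) :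
    sat ls εs s ∈ Icc ls (min s (ls + εs / 2)) := by
  rcases h.eq_or_lt with rfl | h
  · rw [sat_of_abs_le εs (abs_of_nonneg hls).le]
    exact ⟨le_rfl, le_min le_rfl (by linarith)⟩
  have hs : 0 < s := hls.trans_lt h
  unfold sat
  rw [abs_of_pos hs, Real.sign_of_pos hs, if_neg h.not_ge, one_mul]
  split_ifs with hmid
  · have hcorr : (s - ls) ^ 2 / (2 * εs) ≤ (s - ls) / 2 := by
      rw [div_le_iff₀ (by positivity)]
      nlinarith
    have hgap : ls + εs / 2 - (s - (s - ls) ^ 2 / (2 * εs)) = (εs - (s - ls)) ^ 2 / (2 * εs) := by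
      field_simp
      ring
    have : 0 ≤ (εs - (s - ls)) ^ 2 / (2 * εs) := by positivity
    have : 0 ≤ (s - ls) ^ 2 / (2 * εs) := by positivity
    exact ⟨by linarith, le_min (by linarith) (by linarith)⟩
  · rw [mul_one]
    exact ⟨by linarith, le_min (by linarith) le_rfl⟩

lemma abs_sat_le (hls : 0 ≤ ls) (hεs : 0 < εs) (s : ℝ) : |sat ls εs s| ≤ ls + εs / 2 := by
  wlog hs : 0 ≤ s generalizing s
  · simpa [sat_neg] using this (-s) (by linarith)
  rcases le_total s ls with h | h
  · rw [sat_of_abs_le εs ((abs_of_nonneg hs).trans_le h), abs_of_nonneg hs]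
    linarith
  · obtain ⟨hlow, hup⟩ := sat_mem_Icc_of_le hls hεs h
    rw [abs_of_nonneg (hls.trans hlow)]
    exact hup.trans (min_le_right _ _)

lemma abs_sat_sub_le (hεs : 0 < εs) {b : ℝ} (hb : |b| ≤ ls) (s : ℝ) :
    |sat ls εs s - b| ≤ |s - b| := by
  wlog hs : 0 ≤ s generalizing s b
  · have := this (b := -b) (by rwa [abs_neg]) (-s) (by linarith)
    rwa [sat_neg, ← neg_add', abs_neg, ← neg_add', abs_neg] at this
  have hls : 0 ≤ ls := (abs_nonneg b).trans hb
  rcases le_total s ls with h | h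
  · rw [sat_of_abs_le εs ((abs_of_nonneg hs).trans_le h)]
  · obtain ⟨hlow, hup⟩ := sat_mem_Icc_of_le hls hεs h
    have hb' : b ≤ ls := (le_abs_self b).trans hb
    rw [abs_of_nonneg (by linarith), abs_of_nonneg (by linarith)]
    linarith [min_le_left s (ls + εs / 2)]

end Saturation

namespace EuclideanSpace

variable {ι : Type*} [Fintype ι]

lemma norm_le_norm_of_forall_abs_le {x y : EuclideanSpace ℝ ι} (h : ∀ i, |x i| ≤ |y i|) :
    ‖x‖ ≤ ‖y‖ := by
  rw [EuclideanSpace.norm_eq, EuclideanSpace.norm_eq]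
  gcongr with i
  simpa only [Real.norm_eq_abs] using h i

lemma norm_le_sqrt_card_mul {x : EuclideanSpace ℝ ι} {M : ℝ} (hM : 0 ≤ M)
    (h : ∀ i, |x i| ≤ M) : ‖x‖ ≤ √(Fintype.card ι) * M := by
  calc ‖x‖ = √(∑ i, |x i| ^ 2) := by simp only [EuclideanSpace.norm_eq, Real.norm_eq_abs]
    _ ≤ √(∑ _i : ι, M ^ 2) := by gcongr with i; exact h i
    _ = √(Fintype.card ι) * M := by
      rw [Finset.sum_const, Finset.card_univ, nsmul_eq_mul, Real.sqrt_mul (Nat.cast_nonneg _),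
        Real.sqrt_sq hM]

end EuclideanSpace

lemma norm_satv_le {q : ℕ} {ls εs : ℝ} (hls : 0 ≤ ls) (hεs : 0 < εs)
    (θ : EuclideanSpace ℝ (Fin q)) : ‖satv ls εs θ‖ ≤ √q * (ls + εs / 2) := by
  simpa using EuclideanSpace.norm_le_sqrt_card_mul (by positivity)
    (fun i => abs_sat_le hls hεs (θ i))

lemma norm_satv_sub_le {q : ℕ} {ls εs : ℝ} (hεs : 0 < εs) {θ : EuclideanSpace ℝ (Fin q)}
    (hθ : ∀ i, |θ i| ≤ ls) (θ' : EuclideanSpace ℝ (Fin q)) :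
    ‖satv ls εs θ' - θ‖ ≤ ‖θ' - θ‖ :=
  EuclideanSpace.norm_le_norm_of_forall_abs_le fun i => by
    simpa [satv] using abs_sat_sub_le hεs (hθ i) (θ' i)

lemma isClassK_min_add_arctan {C : ℝ} (hC : 0 ≤ C) : IsClassK fun s => min s (C + arctan s) :=
  ⟨(continuous_id.min (continuous_const.add continuous_arctan)).continuousOn,
    fun _ _ _ _ hxy => min_lt_min hxy (by linarith [arctan_strictMono hxy]),
    by simp [hC]⟩

theorem statement0_general (q : ℕ) (lθ ls εs : ℝ)
    (hlθ : 0 < lθ) (hls : lθ < ls) (hεs : 0 < εs) :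
    ∃ (lγ : ℝ) (γs : ℝ → ℝ), 0 < lγ ∧ IsClassK γs ∧
      (∀ s ≥ (0:ℝ), γs s ≤ lγ ∧ γs s ≤ s) ∧
      ∀ (θt θ : EuclideanSpace ℝ (Fin q)), ‖θ‖ ≤ lθ →
        ‖satv ls εs (θ + θt) - θ‖ ≤ γs ‖θt‖ := by
  have hls0 : 0 ≤ ls := (hlθ.trans hls).le
  set C := √q * (ls + εs / 2) + lθ
  have hC : 0 ≤ C := by positivity
  refine ⟨C + π / 2, fun s => min s (C + arctan s), by positivity, isClassK_min_add_arctan hC,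
    fun s _ => ⟨(min_le_right _ _).trans (by linarith [arctan_lt_pi_div_two s]),
      min_le_left _ _⟩, fun θt θ hθ => le_min ?_ ?_⟩
  · have hθi : ∀ i, |θ i| ≤ ls := fun i =>
      ((PiLp.norm_apply_le θ i).trans hθ).trans hls.le
    simpa using norm_satv_sub_le hεs hθi (θ + θt)
  · have harctan : 0 ≤ arctan ‖θt‖ := arctan_nonneg.mpr (norm_nonneg _)
    calc ‖satv ls εs (θ + θt) - θ‖ ≤ ‖satv ls εs (θ + θt)‖ + ‖θ‖ := norm_sub_le _ _
      _ ≤ C := add_le_add (norm_satv_le hls0 hεs _) hθ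
      _ ≤ C + arctan ‖θt‖ := le_add_of_nonneg_right harctan

/-- existence of the gain `γ_s` for the saturation error. -/
theorem statement0 (q : ℕ) (hq : 0 < q) (lθ ls εs : ℝ)
    (hlθ : 0 < lθ) (hls : lθ < ls) (hεs : 0 < εs) (hεs1 : εs ≤ 1) :
    ∃ (lγ : ℝ) (γs : ℝ → ℝ), 0 < lγ ∧ IsClassK γs ∧
      (∀ s ≥ (0:ℝ), γs s ≤ lγ ∧ γs s ≤ s) ∧
      ∀ (θt θ : EuclideanSpace ℝ (Fin q)), ‖θ‖ ≤ lθ →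
        ‖satv ls εs (θ + θt) - θ‖ ≤ γs ‖θt‖ :=
  statement0_general q lθ ls εs hlθ hls hεs
end
end

section
/- Let dz be the dead-zone function with level l_θ > 0 and dzv its componentwise extension to ℝ^q. Then (θ′ − θ)ᵀ·dzv(θ′) ≥ 0 for all θ′ ∈ ℝ^q and all θ ∈ ℝ^q with |θ| ≤ l_θ (Euclidean norm). -/
/-! The inner product splits into the coordinate terms `(θ'ᵢ - θᵢ) · dz θ'ᵢ`, and `|θᵢ| ≤ ‖θ‖ ≤ lθ`.
Each term is nonnegative: `dz` vanishes on `[-lθ, lθ]` and has the sign of its argument outside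
it, where `θ'ᵢ - θᵢ` has that sign too. -/

open Real Set Filter
open scoped RealInnerProductSpace

noncomputable section

theorem dz_of_abs_le {lθ s : ℝ} (h : |s| ≤ lθ) : dz lθ s = 0 := by
  simp [dz, h]

theorem dz_neg (lθ s : ℝ) : dz lθ (-s) = -dz lθ s := by
  simp only [dz, abs_neg, Real.sign_neg]
  split_ifs <;> ring

theorem dz_nonneg_of_lt {lθ s : ℝ} (hlθ : 0 ≤ lθ) (h : lθ < s) : 0 ≤ dz lθ s := by
  have hs : 0 < s := hlθ.trans_lt h
  simp only [dz, abs_of_pos hs, Real.sign_of_pos hs, mul_one, if_neg h.not_ge]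
  split_ifs with h'
  · -- the factor is decreasing in `s` and equals `lθ + 1` at `s = lθ + 1`
    have : 0 ≤ 2 * (lθ + 1) ^ 2 - (2 * lθ + 1) * s := by nlinarith
    positivity
  · exact hs.le

theorem dz_nonpos_of_lt_neg {lθ s : ℝ} (hlθ : 0 ≤ lθ) (h : s < -lθ) : dz lθ s ≤ 0 := by
  have := dz_nonneg_of_lt hlθ (lt_neg_of_lt_neg h)
  rwa [dz_neg, neg_nonneg] at this

theorem sub_mul_dz_nonneg {lθ s t : ℝ} (ht : |t| ≤ lθ) : 0 ≤ (s - t) * dz lθ s := by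
  have hlθ : 0 ≤ lθ := (abs_nonneg t).trans ht
  obtain ⟨ht₁, ht₂⟩ := abs_le.mp ht
  rcases le_or_gt |s| lθ with hs | hs
  · rw [dz_of_abs_le hs, mul_zero]
  rcases lt_abs.mp hs with hs | hs
  · exact mul_nonneg (by linarith) (dz_nonneg_of_lt hlθ hs)
  · exact mul_nonneg_of_nonpos_of_nonpos (by linarith) (dz_nonpos_of_lt_neg hlθ (by linarith))

theorem statement3_general (q : ℕ) (lθ : ℝ)
    (θ' θ : EuclideanSpace ℝ (Fin q)) (hθ : ‖θ‖ ≤ lθ) :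
    0 ≤ ⟪θ' - θ, dzv lθ θ'⟫ := by
  rw [PiLp.inner_apply]
  refine Finset.sum_nonneg fun i _ => ?_
  have hθi : |θ i| ≤ lθ := (PiLp.norm_apply_le θ i).trans hθ
  simpa [dzv, mul_comm] using sub_mul_dz_nonneg (s := θ' i) hθi

/-- `(θ′ − θ)ᵀ·dzv(θ′) ≥ 0` whenever `|θ| ≤ l_θ`. -/
theorem statement3 (q : ℕ) (lθ : ℝ) (hlθ : 0 < lθ)
    (θ' θ : EuclideanSpace ℝ (Fin q)) (hθ : ‖θ‖ ≤ lθ) :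
    0 ≤ ⟪θ' - θ, dzv lθ θ'⟫ :=
  statement3_general q lθ θ' θ hθ
end
end

section
/- (Lemma 3, core estimate) Let V_est: [0,∞) × ℝ^q → [0,∞) be C¹ with constants a1, a2, a3, a4 > 0 such that a1|θ̃|² ≤ V_est(t, θ̃) ≤ a2|θ̃|², ∂V_est/∂t + ∂V_est/∂θ̃·H(θ, θ̃, x_r(t)) ≤ −a3|θ̃|², and |∂V_est/∂θ̃| ≤ a4|θ̃| for all t, θ̃. Suppose Δ: arguments (θ, θ̃, x_r, e) ↦ ℝ^q satisfies |Δ(θ, θ̃, x_r, e)| ≤ l_γ·κ2(|e|) for a constant l_γ > 0 and a class K function κ2. Set a* := (√a2·a4)/(√a1·a3). Then for every τ_est > 1 and all t ≥ 0, θ̃ ∈ ℝ^q, e ∈ ℝⁿ: if V_est(t, θ̃) ≥ a1·(τ_est·a*·l_γ)²·κ2(|e|)², then ∂V_est/∂t(t, θ̃) + ∂V_est/∂θ̃(t, θ̃)·[H(θ, θ̃, x_r(t)) + Δ(θ, θ̃, x_r(t), e)] ≤ −(a3(τ_est − 1)/τ_est)·|θ̃|². -/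
open Real Set Filter
open scoped RealInnerProductSpace

noncomputable section

/-! The gain `a*` is chosen so that the sublevel condition on `V`, transported through
`V ≤ a₂‖θ̃‖²`, reads `τ a₄ l_γ κ₂(‖e‖) ≤ a₃ ‖θ̃‖`. Then the perturbation term
`∂V/∂θ̃ · Δ ≤ a₄ ‖θ̃‖ l_γ κ₂(‖e‖)` is at most `(a₃/τ) ‖θ̃‖²`, a `1/τ` fraction of the nominal
decay rate. -/

theorem mul_sq_gain_eq {a1 a2 : ℝ} (ha1 : 0 < a1) (ha2 : 0 ≤ a2) (τ a3 a4 c k : ℝ) :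
    a1 * (τ * (Real.sqrt a2 * a4 / (Real.sqrt a1 * a3)) * c) ^ 2 * k ^ 2 =
      a2 * (τ * (a4 * (c * k)) / a3) ^ 2 := by
  have hs1 : Real.sqrt a1 ^ 2 = a1 := Real.sq_sqrt ha1.le
  have hs2 : Real.sqrt a2 ^ 2 = a2 := Real.sq_sqrt ha2
  have : Real.sqrt a1 ≠ 0 := (Real.sqrt_pos.2 ha1).ne'
  simp only [div_pow, mul_pow, hs1, hs2]
  field_simp

theorem lyapunov_deriv_add_perturbation_le {E : Type*} [NormedAddCommGroup E]
    [NormedSpace ℝ E] (L : ℝ × E →L[ℝ] ℝ) {x h d : E} {a3 a4 g τ : ℝ}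
    (ha3 : 0 < a3) (ha4 : 0 ≤ a4) (hτ : 0 < τ)
    (hnominal : L (1, h) ≤ -a3 * ‖x‖ ^ 2)
    (hgrad : |L (0, d)| ≤ a4 * ‖x‖ * ‖d‖) (hd : ‖d‖ ≤ g)
    (hsmall : τ * (a4 * g) / a3 ≤ ‖x‖) :
    L (1, h + d) ≤ -(a3 * (τ - 1) / τ) * ‖x‖ ^ 2 := by
  have hgain : a4 * g ≤ a3 / τ * ‖x‖ := by
    rw [div_le_iff₀ ha3] at hsmall
    rw [div_mul_eq_mul_div, le_div_iff₀ hτ]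
    linarith
  calc L (1, h + d) = L (1, h) + L (0, d) := by
        rw [← map_add, Prod.mk_add_mk, add_zero]
    _ ≤ -a3 * ‖x‖ ^ 2 + ‖x‖ * (a4 * g) := by
        gcongr
        calc L (0, d) ≤ a4 * ‖x‖ * ‖d‖ := (le_abs_self _).trans hgrad
          _ ≤ a4 * ‖x‖ * g := by gcongr
          _ = ‖x‖ * (a4 * g) := by ring
    _ ≤ -a3 * ‖x‖ ^ 2 + ‖x‖ * (a3 / τ * ‖x‖) := by gcongr
    _ = -(a3 * (τ - 1) / τ) * ‖x‖ ^ 2 := by field_simp; ring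

theorem statement7_general (q n : ℕ)
    (H : EuclideanSpace ℝ (Fin q) → EuclideanSpace ℝ (Fin q) →
      EuclideanSpace ℝ (Fin n) → EuclideanSpace ℝ (Fin q))
    (Δ : EuclideanSpace ℝ (Fin q) → EuclideanSpace ℝ (Fin q) →
      EuclideanSpace ℝ (Fin n) → EuclideanSpace ℝ (Fin n) → EuclideanSpace ℝ (Fin q))
    (θ : EuclideanSpace ℝ (Fin q)) (xr : ℝ → EuclideanSpace ℝ (Fin n))
    (V : ℝ → EuclideanSpace ℝ (Fin q) → ℝ)
    (a1 a2 a3 a4 : ℝ) (ha1 : 0 < a1) (ha2 : 0 < a2) (ha3 : 0 < a3) (ha4 : 0 < a4)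
    (hVb : ∀ t ≥ (0:ℝ), ∀ θt : EuclideanSpace ℝ (Fin q),
      a1 * ‖θt‖ ^ 2 ≤ V t θt ∧ V t θt ≤ a2 * ‖θt‖ ^ 2)
    (hVd : ∀ t ≥ (0:ℝ), ∀ θt : EuclideanSpace ℝ (Fin q),
      fderiv ℝ (Function.uncurry V) (t, θt) (1, H θ θt (xr t)) ≤ -a3 * ‖θt‖ ^ 2)
    (hVg : ∀ t ≥ (0:ℝ), ∀ (θt v : EuclideanSpace ℝ (Fin q)),
      |fderiv ℝ (Function.uncurry V) (t, θt) (0, v)| ≤ a4 * ‖θt‖ * ‖v‖)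
    (lγ : ℝ) (κ2 : ℝ → ℝ)
    (hΔ : ∀ (θ' θt : EuclideanSpace ℝ (Fin q)) (x e : EuclideanSpace ℝ (Fin n)),
      ‖Δ θ' θt x e‖ ≤ lγ * κ2 ‖e‖) :
    ∀ τest > (1:ℝ), ∀ t ≥ (0:ℝ), ∀ (θt : EuclideanSpace ℝ (Fin q))
      (e : EuclideanSpace ℝ (Fin n)),
      V t θt ≥ a1 * (τest * (Real.sqrt a2 * a4 / (Real.sqrt a1 * a3)) * lγ) ^ 2 *
          κ2 ‖e‖ ^ 2 →
      fderiv ℝ (Function.uncurry V) (t, θt)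
          (1, H θ θt (xr t) + Δ θ θt (xr t) e) ≤
        -(a3 * (τest - 1) / τest) * ‖θt‖ ^ 2 := by
  intro τ hτ t ht θt e hV
  have hsq : a2 * (τ * (a4 * (lγ * κ2 ‖e‖)) / a3) ^ 2 ≤ a2 * ‖θt‖ ^ 2 := by
    rw [← mul_sq_gain_eq ha1 ha2.le]
    exact hV.trans (hVb t ht θt).2
  have hsmall : τ * (a4 * (lγ * κ2 ‖e‖)) / a3 ≤ ‖θt‖ :=
    le_of_sq_le_sq (le_of_mul_le_mul_left hsq ha2) (norm_nonneg θt)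
  exact lyapunov_deriv_add_perturbation_le _ ha3 ha4.le (by linarith) (hVd t ht θt)
    (hVg t ht θt _) (hΔ θ θt (xr t) e) hsmall

/-- Lemma 3, core estimate: ISS implication for the perturbed
estimation error Lyapunov function. -/
theorem statement7 (q n : ℕ)
    (H : EuclideanSpace ℝ (Fin q) → EuclideanSpace ℝ (Fin q) →
      EuclideanSpace ℝ (Fin n) → EuclideanSpace ℝ (Fin q))
    (Δ : EuclideanSpace ℝ (Fin q) → EuclideanSpace ℝ (Fin q) →
      EuclideanSpace ℝ (Fin n) → EuclideanSpace ℝ (Fin n) → EuclideanSpace ℝ (Fin q))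
    (θ : EuclideanSpace ℝ (Fin q)) (xr : ℝ → EuclideanSpace ℝ (Fin n))
    (V : ℝ → EuclideanSpace ℝ (Fin q) → ℝ) (hV : ContDiff ℝ 1 (Function.uncurry V))
    (a1 a2 a3 a4 : ℝ) (ha1 : 0 < a1) (ha2 : 0 < a2) (ha3 : 0 < a3) (ha4 : 0 < a4)
    (hVb : ∀ t ≥ (0:ℝ), ∀ θt : EuclideanSpace ℝ (Fin q),
      a1 * ‖θt‖ ^ 2 ≤ V t θt ∧ V t θt ≤ a2 * ‖θt‖ ^ 2)
    (hVd : ∀ t ≥ (0:ℝ), ∀ θt : EuclideanSpace ℝ (Fin q),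
      fderiv ℝ (Function.uncurry V) (t, θt) (1, H θ θt (xr t)) ≤ -a3 * ‖θt‖ ^ 2)
    (hVg : ∀ t ≥ (0:ℝ), ∀ (θt v : EuclideanSpace ℝ (Fin q)),
      |fderiv ℝ (Function.uncurry V) (t, θt) (0, v)| ≤ a4 * ‖θt‖ * ‖v‖)
    (lγ : ℝ) (hlγ : 0 < lγ) (κ2 : ℝ → ℝ) (hκ2 : IsClassK κ2)
    (hΔ : ∀ (θ' θt : EuclideanSpace ℝ (Fin q)) (x e : EuclideanSpace ℝ (Fin n)),
      ‖Δ θ' θt x e‖ ≤ lγ * κ2 ‖e‖) :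
    ∀ τest > (1:ℝ), ∀ t ≥ (0:ℝ), ∀ (θt : EuclideanSpace ℝ (Fin q))
      (e : EuclideanSpace ℝ (Fin n)),
      V t θt ≥ a1 * (τest * (Real.sqrt a2 * a4 / (Real.sqrt a1 * a3)) * lγ) ^ 2 *
          κ2 ‖e‖ ^ 2 →
      fderiv ℝ (Function.uncurry V) (t, θt)
          (1, H θ θt (xr t) + Δ θ θt (xr t) e) ≤
        -(a3 * (τest - 1) / τest) * ‖θt‖ ^ 2 :=
  statement7_general q n H Δ θ xr V a1 a2 a3 a4 ha1 ha2 ha3 ha4 hVb hVd hVg lγ κ2 hΔ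
end
end

section
/- Let α1, α2, α3, α4 be class K∞ functions, κ1 continuous nondecreasing, κ2 of class K, γ_s a concave class K function with γ_s(s) ≤ s for all s, and constants a*, l_γ > 0 and τ_err > τ′_err > 1. Suppose α3(s) ≥ τ_err·γ_s(a*·l_γ·κ2(α1^{-1}(α2(s))))·α4(s)·κ1(s) for all s ≥ 0. Then for all e ∈ ℝⁿ, θ̃ ∈ ℝ^q and every V ∈ [α1(|e|), α2(|e|)]: if |θ̃| ≤ τ′_err·a*·l_γ·κ2(α1^{-1}(V)), then −α3(|e|) + α4(|e|)·κ1(|e|)·γ_s(|θ̃|) ≤ −(τ_err − τ′_err)·γ_s(a*·l_γ·κ2(α1^{-1}(α2(|e|))))·α4(|e|)·κ1(|e|). -/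
open Real Set Filter
open scoped RealInnerProductSpace

noncomputable section

/-! The gain of the estimation error is pushed through the comparison functions:
`α1⁻¹` and `κ2` are monotone, so `‖θ̃‖ ≤ τ'·a*·l_γ·κ2(α1⁻¹(V)) ≤ τ'·B` with
`B = a*·l_γ·κ2(α1⁻¹(α2 ‖e‖))`, and concavity of `γ_s` with `γ_s 0 = 0` gives
`γ_s(τ'·B) ≤ τ'·γ_s(B)` since `τ' ≥ 1`. The small-gain condition then absorbs
`τ'·γ_s(B)·α4·κ1` into `α3`, leaving the margin `(τ - τ')·γ_s(B)·α4·κ1`. -/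

lemma ConcaveOn.map_smul_le_mul_of_one_le {E : Type*} [AddCommGroup E] [Module ℝ E]
    {s : Set E} {f : E → ℝ} (hf : ConcaveOn ℝ s f) (h0 : (0 : E) ∈ s) (hf0 : 0 ≤ f 0)
    {c : ℝ} {x : E} (hc : 1 ≤ c) (hcx : c • x ∈ s) : f (c • x) ≤ c * f x := by
  have hc0 : 0 < c := one_pos.trans_le hc
  have hc' : 0 ≤ 1 - c⁻¹ := sub_nonneg.2 (inv_le_one_of_one_le₀ hc)
  -- `x` is the convex combination `c⁻¹ • (c • x) + (1 - c⁻¹) • 0`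
  have hconc := hf.2 hcx h0 (inv_nonneg.2 hc0.le) hc' (add_sub_cancel _ _)
  rw [smul_zero, add_zero, smul_smul, inv_mul_cancel₀ hc0.ne', one_smul, smul_eq_mul,
    smul_eq_mul] at hconc
  have hle : c⁻¹ * f (c • x) ≤ f x := by linarith [mul_nonneg hc' hf0]
  calc f (c • x) = c * (c⁻¹ * f (c • x)) := by field_simp
    _ ≤ c * f x := mul_le_mul_of_nonneg_left hle hc0.le

namespace IsClassK

variable {ρ : ℝ → ℝ}

lemma monotoneOn (h : IsClassK ρ) : MonotoneOn ρ (Ici 0) := h.2.1.monotoneOn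

lemma nonneg (h : IsClassK ρ) {s : ℝ} (hs : 0 ≤ s) : 0 ≤ ρ s := by
  simpa only [h.2.2] using h.monotoneOn self_mem_Ici hs hs

end IsClassK

namespace IsClassKInfty

variable {ρ ρinv : ℝ → ℝ}

lemma surjOn (h : IsClassKInfty ρ) : SurjOn ρ (Ici 0) (Ici 0) := by
  have := intermediate_value_Ici h.1.1 h.2
  rwa [h.1.2.2] at this

lemma mapsTo_of_leftInvOn (h : IsClassKInfty ρ) (hinv : LeftInvOn ρinv ρ (Ici 0)) :
    MapsTo ρinv (Ici 0) (Ici 0) := by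
  rintro _ hu
  obtain ⟨s, hs, rfl⟩ := h.surjOn hu
  rwa [hinv hs]

lemma monotoneOn_of_leftInvOn (h : IsClassKInfty ρ) (hinv : LeftInvOn ρinv ρ (Ici 0)) :
    MonotoneOn ρinv (Ici 0) := by
  rintro _ hu _ hv huv
  obtain ⟨s, hs, rfl⟩ := h.surjOn hu
  obtain ⟨t, ht, rfl⟩ := h.surjOn hv
  rw [hinv hs, hinv ht]
  exact (h.1.2.1.le_iff_le hs ht).1 huv

end IsClassKInfty

theorem statement9_general (q n : ℕ)
    (α1 α2 α3 α4 : ℝ → ℝ) (hα1 : IsClassKInfty α1)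
    (hα4 : IsClassKInfty α4)
    -- the inverse of α1 on [0, ∞)
    (α1inv : ℝ → ℝ) (hα1inv : ∀ s ≥ (0:ℝ), α1inv (α1 s) = s ∧ α1 (α1inv s) = s)
    (κ1 : ℝ → ℝ)
    (hκ1nn : ∀ s ≥ (0:ℝ), 0 ≤ κ1 s)
    (κ2 : ℝ → ℝ) (hκ2 : IsClassK κ2)
    (γs : ℝ → ℝ) (hγs : IsClassK γs) (hγs_conc : ConcaveOn ℝ (Set.Ici 0) γs)
    (ast lγ τerr τerr' : ℝ) (hast : 0 < ast) (hlγ : 0 < lγ)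
    (hτ : 1 < τerr')
    -- the small-gain condition (27)
    (hsg : ∀ s ≥ (0:ℝ), α3 s ≥ τerr * γs (ast * lγ * κ2 (α1inv (α2 s))) * α4 s * κ1 s) :
    ∀ (e : EuclideanSpace ℝ (Fin n)) (θt : EuclideanSpace ℝ (Fin q)) (V : ℝ),
      α1 ‖e‖ ≤ V → V ≤ α2 ‖e‖ →
      ‖θt‖ ≤ τerr' * ast * lγ * κ2 (α1inv V) →
      -α3 ‖e‖ + α4 ‖e‖ * κ1 ‖e‖ * γs ‖θt‖ ≤
        -((τerr - τerr') * γs (ast * lγ * κ2 (α1inv (α2 ‖e‖))) * α4 ‖e‖ * κ1 ‖e‖) := by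
  intro e θt V hV1 hV2 hθ
  have he := norm_nonneg e
  have hV : 0 ≤ V := (hα1.1.nonneg he).trans hV1
  have hW : 0 ≤ α2 ‖e‖ := hV.trans hV2
  have hinv : LeftInvOn α1inv α1 (Ici 0) := fun s hs => (hα1inv s hs).1
  have hmaps := hα1.mapsTo_of_leftInvOn hinv
  have hτ0 : 0 ≤ τerr' := zero_le_one.trans hτ.le
  set A := ast * lγ * κ2 (α1inv V)
  set B := ast * lγ * κ2 (α1inv (α2 ‖e‖))
  have hA : 0 ≤ A := mul_nonneg (by positivity) (hκ2.nonneg (hmaps hV))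
  have hAB : A ≤ B := mul_le_mul_of_nonneg_left (hκ2.monotoneOn (hmaps hV) (hmaps hW)
    (hα1.monotoneOn_of_leftInvOn hinv hV hW hV2)) (by positivity)
  have hgain : γs ‖θt‖ ≤ τerr' * γs B := calc
    γs ‖θt‖ ≤ γs (τerr' * A) := hγs.monotoneOn (norm_nonneg θt) (mul_nonneg hτ0 hA)
      (by simpa only [A, mul_assoc] using hθ)
    _ ≤ τerr' * γs A := hγs_conc.map_smul_le_mul_of_one_le self_mem_Ici hγs.2.2.ge hτ.le
      (mul_nonneg hτ0 hA)
    _ ≤ τerr' * γs B := mul_le_mul_of_nonneg_left (hγs.monotoneOn hA (hA.trans hAB) hAB) hτ0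
  have hweight : 0 ≤ α4 ‖e‖ * κ1 ‖e‖ := mul_nonneg (hα4.1.nonneg he) (hκ1nn _ he)
  linear_combination hsg ‖e‖ he + mul_le_mul_of_nonneg_left hgain hweight

/-- key small-gain implication showing uniform ISS of the tracking
error subsystem. -/
theorem statement9 (q n : ℕ)
    (α1 α2 α3 α4 : ℝ → ℝ) (hα1 : IsClassKInfty α1) (hα2 : IsClassKInfty α2)
    (hα3 : IsClassKInfty α3) (hα4 : IsClassKInfty α4)
    -- the inverse of α1 on [0, ∞)
    (α1inv : ℝ → ℝ) (hα1inv : ∀ s ≥ (0:ℝ), α1inv (α1 s) = s ∧ α1 (α1inv s) = s)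
    (κ1 : ℝ → ℝ) (hκ1c : ContinuousOn κ1 (Set.Ici 0)) (hκ1m : MonotoneOn κ1 (Set.Ici 0))
    (hκ1nn : ∀ s ≥ (0:ℝ), 0 ≤ κ1 s)
    (κ2 : ℝ → ℝ) (hκ2 : IsClassK κ2)
    (γs : ℝ → ℝ) (hγs : IsClassK γs) (hγs_conc : ConcaveOn ℝ (Set.Ici 0) γs)
    (hγs_le : ∀ s ≥ (0:ℝ), γs s ≤ s)
    (ast lγ τerr τerr' : ℝ) (hast : 0 < ast) (hlγ : 0 < lγ)
    (hτ : 1 < τerr') (hττ : τerr' < τerr)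
    -- the small-gain condition (27)
    (hsg : ∀ s ≥ (0:ℝ), α3 s ≥ τerr * γs (ast * lγ * κ2 (α1inv (α2 s))) * α4 s * κ1 s) :
    ∀ (e : EuclideanSpace ℝ (Fin n)) (θt : EuclideanSpace ℝ (Fin q)) (V : ℝ),
      α1 ‖e‖ ≤ V → V ≤ α2 ‖e‖ →
      ‖θt‖ ≤ τerr' * ast * lγ * κ2 (α1inv V) →
      -α3 ‖e‖ + α4 ‖e‖ * κ1 ‖e‖ * γs ‖θt‖ ≤
        -((τerr - τerr') * γs (ast * lγ * κ2 (α1inv (α2 ‖e‖))) * α4 ‖e‖ * κ1 ‖e‖) :=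
  statement9_general q n α1 α2 α3 α4 hα1 hα4 α1inv hα1inv κ1 hκ1nn κ2 hκ2 γs hγs hγs_conc ast lγ
    τerr τerr' hast hlγ hτ hsg
end
end

section
/- Let a1 > 0, let γ_s be a class K function satisfying γ_s(s) ≤ s and γ_s(s) ≤ l_γ for all s ≥ 0 (for some constant l_γ > 0), and let γ: [0,∞) → [0,∞) satisfy γ(s) ≤ ḡ(s)·s for all s ≥ 0, for some continuous nondecreasing ḡ: [0,∞) → [0,∞). Then there exists a constant g > 0 such that γ_s(√(γ(s)/a1))² ≤ g²·s for all s ≥ 0. -/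
open Real Set Filter
open scoped RealInnerProductSpace

noncomputable section

/- For `s ≤ 1` the bound `γ_s(x) ≤ x` gives `γ_s(√(γ s / a1))² ≤ γ s / a1 ≤ ḡ(1) s / a1`,
and for `s ≥ 1` the bound `γ_s ≤ l_γ` gives `γ_s(…)² ≤ l_γ² ≤ l_γ² s`; so
`g² = ḡ(1) / a1 + l_γ²` works for all `s ≥ 0`. -/

theorem IsClassK.nonneg_s19 {ρ : ℝ → ℝ} (hρ : IsClassK ρ) {s : ℝ} (hs : 0 ≤ s) : 0 ≤ ρ s := by
  obtain ⟨-, hmono, hzero⟩ := hρ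
  simpa [hzero] using hmono.monotoneOn (Set.mem_Ici.2 le_rfl) hs hs

theorem IsClassK.sq_comp_sqrt_le {ρ : ℝ → ℝ} (hρ : IsClassK ρ) (hle : ∀ s ≥ (0:ℝ), ρ s ≤ s)
    {t : ℝ} (ht : 0 ≤ t) : ρ (√t) ^ 2 ≤ t := by
  calc ρ (√t) ^ 2 ≤ √t ^ 2 :=
        pow_le_pow_left₀ (hρ.nonneg_s19 (Real.sqrt_nonneg t)) (hle _ (Real.sqrt_nonneg t)) 2
    _ = t := Real.sq_sqrt ht

theorem le_mul_of_le_monotone_mul {γ gbar : ℝ → ℝ} (hgbar : MonotoneOn gbar (Set.Ici 0))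
    (hγ : ∀ s ≥ (0:ℝ), γ s ≤ gbar s * s) {r s : ℝ} (hs : 0 ≤ s) (hsr : s ≤ r) :
    γ s ≤ gbar r * s :=
  (hγ s hs).trans <|
    mul_le_mul_of_nonneg_right (hgbar (Set.mem_Ici.2 hs) (Set.mem_Ici.2 (hs.trans hsr)) hsr) hs

theorem le_add_mul_of_le_mul_of_le {f : ℝ → ℝ} {A B : ℝ} (hA : 0 ≤ A) (hB : 0 ≤ B)
    (hsmall : ∀ s, 0 ≤ s → s ≤ 1 → f s ≤ A * s) (hlarge : ∀ s, 1 ≤ s → f s ≤ B) :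
    ∀ s ≥ (0:ℝ), f s ≤ (A + B) * s := by
  intro s hs
  rcases le_total s 1 with h1 | h1
  · nlinarith [hsmall s hs h1, mul_nonneg hB hs]
  · nlinarith [hlarge s h1, mul_nonneg hA hs]

theorem statement19_general (a1 lγ : ℝ) (ha1 : 0 < a1) (hlγ : 0 < lγ)
    (γs : ℝ → ℝ) (hγs : IsClassK γs)
    (hγs_le : ∀ s ≥ (0:ℝ), γs s ≤ s ∧ γs s ≤ lγ)
    (γ gbar : ℝ → ℝ)
    (hgbar_m : MonotoneOn gbar (Set.Ici 0)) (hgbar_nn : ∀ s ≥ (0:ℝ), 0 ≤ gbar s)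
    (hγ : ∀ s ≥ (0:ℝ), 0 ≤ γ s ∧ γ s ≤ gbar s * s) :
    ∃ g : ℝ, 0 < g ∧ ∀ s ≥ (0:ℝ), γs (Real.sqrt (γ s / a1)) ^ 2 ≤ g ^ 2 * s := by
  have hA : 0 ≤ gbar 1 / a1 := div_nonneg (hgbar_nn 1 zero_le_one) ha1.le
  have hB : 0 < lγ ^ 2 := pow_pos hlγ 2
  refine ⟨√(gbar 1 / a1 + lγ ^ 2), Real.sqrt_pos.2 (by positivity), ?_⟩
  rw [Real.sq_sqrt (by positivity)]
  refine le_add_mul_of_le_mul_of_le hA hB.le (fun s hs h1 => ?_) (fun s h1 => ?_)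
  · calc γs √(γ s / a1) ^ 2 ≤ γ s / a1 :=
          hγs.sq_comp_sqrt_le (fun x hx => (hγs_le x hx).1) (div_nonneg (hγ s hs).1 ha1.le)
      _ ≤ gbar 1 * s / a1 :=
          div_le_div_of_nonneg_right
            (le_mul_of_le_monotone_mul hgbar_m (fun x hx => (hγ x hx).2) hs h1) ha1.le
      _ = gbar 1 / a1 * s := by ring
  · have hx : 0 ≤ √(γ s / a1) := Real.sqrt_nonneg _
    exact pow_le_pow_left₀ (hγs.nonneg_s19 hx) (hγs_le _ hx).2 2

/-- auxiliary growth estimate converting O(s) small-argument behavior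
into a global linear bound after composition with γ_s. -/
theorem statement19 (a1 lγ : ℝ) (ha1 : 0 < a1) (hlγ : 0 < lγ)
    (γs : ℝ → ℝ) (hγs : IsClassK γs)
    (hγs_le : ∀ s ≥ (0:ℝ), γs s ≤ s ∧ γs s ≤ lγ)
    (γ gbar : ℝ → ℝ) (hgbar_c : ContinuousOn gbar (Set.Ici 0))
    (hgbar_m : MonotoneOn gbar (Set.Ici 0)) (hgbar_nn : ∀ s ≥ (0:ℝ), 0 ≤ gbar s)
    (hγ : ∀ s ≥ (0:ℝ), 0 ≤ γ s ∧ γ s ≤ gbar s * s) :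
    ∃ g : ℝ, 0 < g ∧ ∀ s ≥ (0:ℝ), γs (Real.sqrt (γ s / a1)) ^ 2 ≤ g ^ 2 * s :=
  statement19_general a1 lγ ha1 hlγ γs hγs hγs_le γ gbar hgbar_m hgbar_nn hγ
end
end
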